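/- Let B : Y × P → Set Y be a set-valued map and let W_N be the N-step forward reachable set as defined from B. Suppose w_N, v_1, ..., v_N : Y × P × Y → ℝ satisfy: (1) v_1(x1, x2, x3) ≥ 0 for all x3 ∈ B(x1, x2) and all (x1, x2) ∈ Y × P; (2) for each ζ ∈ {1, ..., N−1}, v_{ζ+1}(x1, x2, x4) ≥ v_ζ(x1, x2, x3) whenever x4 ∈ B(x3, x5) for some x5 ∈ P, for all (x1, x2) ∈ Y × P and x3 ∈ Y; (3) w_N(x1, x2, x3) ≥ 0 everywhere; (4) w_N(x1, x2, x3) ≥ v_ζ(x1, x2, x3) + 1 for all ζ ∈ {1, ..., N} and all (x1, x2, x3). Then for every (y, p) ∈ Y × P, W_N(y, p) ⊆ { z ∈ Y | w_N(y, p, z) ≥ 1 }. -/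
import Mathlib


def ReachIn {α β : Type*} (B : α → β → Set α) (PP : Set β)
    (y : α) (p : β) (n : ℕ) (z : α) : Prop :=
  ∃ c : ℕ → α, ∃ q : ℕ → β,
    c 1 ∈ B y p ∧
    (∀ j, 1 ≤ j → j + 1 ≤ n → q j ∈ PP ∧ c (j + 1) ∈ B (c j) (q j)) ∧
    c n = z

def FRS {α β : Type*} (B : α → β → Set α) (PP : Set β)
    (N : ℕ) (y : α) (p : β) : Set α :=
  {z | ∃ n, 1 ≤ n ∧ n ≤ N ∧ ReachIn B PP y p n z}

/-- Feasible functions of the linear program (FRS) outer-approximate the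
`N`-step forward reachable set by the 1-superlevel set of `w`. -/
theorem FRS_outer_approx {α β : Type*} (B : α → β → Set α) (PP : Set β)
    (N : ℕ) (w : α → β → α → ℝ) (v : ℕ → α → β → α → ℝ)
    (h1 : ∀ x1 : α, ∀ x2 : β, ∀ x3 ∈ B x1 x2, 0 ≤ v 1 x1 x2 x3)
    (h2 : ∀ ζ, 1 ≤ ζ → ζ + 1 ≤ N → ∀ (x1 : α) (x2 : β) (x3 : α),
      ∀ x5 ∈ PP, ∀ x4 ∈ B x3 x5, v ζ x1 x2 x3 ≤ v (ζ + 1) x1 x2 x4)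
    (h3 : ∀ (x1 : α) (x2 : β) (x3 : α), 0 ≤ w x1 x2 x3)
    (h4 : ∀ ζ, 1 ≤ ζ → ζ ≤ N → ∀ (x1 : α) (x2 : β) (x3 : α),
      v ζ x1 x2 x3 + 1 ≤ w x1 x2 x3) :
    ∀ (y : α) (p : β), FRS B PP N y p ⊆ {z | 1 ≤ w y p z} := by
  intro y p z hz
  obtain ⟨n, hn1, hnN, c, q, hc1, hchain, hcn⟩ := hz
  have key : ∀ j, 1 ≤ j → j ≤ n → 0 ≤ v j y p (c j) := by
    intro j
    induction j with
    | zero => omega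
    | succ k ih =>
      intro _ hkn
      rcases Nat.eq_zero_or_pos k with h | h
      · subst h; exact h1 y p (c 1) hc1
      · have hk1 : 1 ≤ k := h
        obtain ⟨hq, hb⟩ := hchain k hk1 hkn
        exact le_trans (ih hk1 (by omega)) (h2 k hk1 (by omega) y p (c k) (q k) hq _ hb)
  have := h4 n hn1 hnN y p (c n)
  have h0 := key n hn1 le_rfl
  rw [hcn] at this h0
  show (1:ℝ) ≤ w y p z
  linarith
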